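/- If ⟨X,t⟩ is a non-final state of S_π with X ≠ ∅ that is reachable from the initial state, then the state ⟨X',t⟩ with X' = X \ {max X} is also reachable from the initial state; moreover, ⟨X',t⟩ is reachable by a word of length max X' + t (with max ∅ = 0), which is strictly smaller than the length of any word that reaches ⟨X,t⟩ (every such word has length at least max X + t). -/

import Mathlib

variable {A : Type*}

/-- One transition of the subset seed automaton `S_π`: the state `none` is the final sink
state, a state `some (X, t)` is the non-final state `⟨X,t⟩`. -/
def seedStep [DecidableEq A] (one : A) (π : ℕ → Finset A) (s : ℕ) :
    Option (Finset ℕ × ℕ) → A → Option (Finset ℕ × ℕ)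
  | none, _ => none
  | some (X, t), a =>
    if a = one then
      if X.sup id + (t + 1) = s then none else some (X, t + 1)
    else
      let Y : Finset ℕ := ((Finset.Icc 1 (t + 1)).filter fun x => a ∈ π x) ∪
        ((X.filter fun x => x + t + 1 ≤ s ∧ a ∈ π (x + t + 1)).image fun x => x + t + 1)
      if Y.sup id = s then none else some (Y, 0)

/-- Reading a word from a state, applying transitions letter by letter. -/
def seedRead [DecidableEq A] (one : A) (π : ℕ → Finset A) (s : ℕ)
    (q : Option (Finset ℕ × ℕ)) (w : List A) : Option (Finset ℕ × ℕ) :=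
  w.foldl (seedStep one π s) q

/-- `π` matches the alignment `w` at the (1-based) position `p`. -/
def seedMatches (one : A) (π : ℕ → Finset A) (s : ℕ) (w : List A) (p : ℕ) : Prop :=
  1 ≤ p ∧ p + s ≤ w.length + 1 ∧
    ∀ i, 1 ≤ i → i ≤ s → w.getD (p + i - 2) one ∈ π i

/-!
A position `x ∈ X` of the state `⟨X,t⟩` records a partial match that started `x + t` letters
ago. Hence reading only the last `L` letters of a word that reaches `⟨X,t⟩` leads to the state
that keeps the positions with `x + t ≤ L` and the run `min t L` of trailing `1`s. For
`L = max X' + t` this is `⟨X',t⟩`; for `L = |W|` it forces `max X + t ≤ |W|`.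
-/

theorem Finset.sup_erase_sup_lt {α : Type*} [LinearOrder α] [OrderBot α] {X : Finset α}
    (h : ⊥ < X.sup id) : (X.erase (X.sup id)).sup id < X.sup id :=
  (Finset.sup_lt_iff h).2 fun _ hx =>
    lt_of_le_of_ne (Finset.le_sup (f := id) (Finset.mem_of_mem_erase hx))
      (Finset.ne_of_mem_erase hx)

section SubsetSeedAutomaton

variable [DecidableEq A] (one : A) (π : ℕ → Finset A) (s : ℕ)

/-- The set `X_U ∪ X_V` entered on a letter `a ≠ one` from the state `⟨X,t⟩`. -/
def seedShift (X : Finset ℕ) (t : ℕ) (a : A) : Finset ℕ :=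
  ((Finset.Icc 1 (t + 1)).filter fun x => a ∈ π x) ∪
    ((X.filter fun x => x + t + 1 ≤ s ∧ a ∈ π (x + t + 1)).image fun x => x + t + 1)

theorem seedStep_some (X : Finset ℕ) (t : ℕ) (a : A) :
    seedStep one π s (some (X, t)) a =
      if a = one then
        if X.sup id + (t + 1) = s then none else some (X, t + 1)
      else
        if (seedShift π s X t a).sup id = s then none else some (seedShift π s X t a, 0) :=
  rfl

theorem seedStep_eq_some {X₁ X : Finset ℕ} {t₁ t : ℕ} {a : A}
    (h : seedStep one π s (some (X₁, t₁)) a = some (X, t)) :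
    (a = one ∧ X = X₁ ∧ t = t₁ + 1 ∧ X₁.sup id + (t₁ + 1) ≠ s) ∨
      (a ≠ one ∧ X = seedShift π s X₁ t₁ a ∧ t = 0 ∧ X.sup id ≠ s) := by
  rw [seedStep_some] at h
  split_ifs at h with ha hfin hfin <;> cases h
  · exact Or.inl ⟨ha, rfl, rfl, hfin⟩
  · exact Or.inr ⟨ha, rfl, rfl, hfin⟩

theorem seedRead_nil (q : Option (Finset ℕ × ℕ)) : seedRead one π s q [] = q :=
  rfl

theorem seedRead_concat (q : Option (Finset ℕ × ℕ)) (w : List A) (a : A) :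
    seedRead one π s q (w ++ [a]) = seedStep one π s (seedRead one π s q w) a :=
  List.foldl_concat ..

def SeedInvariant (X : Finset ℕ) (t : ℕ) : Prop :=
  (∀ x ∈ X, 1 ≤ x) ∧ X.sup id + t < s

theorem seedInvariant_of_seedStep {X₁ X : Finset ℕ} {t₁ t : ℕ} {a : A}
    (h₁ : SeedInvariant s X₁ t₁) (h : seedStep one π s (some (X₁, t₁)) a = some (X, t)) :
    SeedInvariant s X t := by
  obtain ⟨hpos, hlt⟩ := h₁
  rcases seedStep_eq_some one π s h with ⟨-, rfl, rfl, hfin⟩ | ⟨-, rfl, rfl, hfin⟩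
  · exact ⟨hpos, by omega⟩
  · have hle : (seedShift π s X₁ t₁ a).sup id ≤ s := by
      refine Finset.sup_le fun x hx => ?_
      simp only [seedShift, Finset.mem_union, Finset.mem_filter, Finset.mem_Icc,
        Finset.mem_image] at hx
      rcases hx with ⟨⟨-, hx⟩, -⟩ | ⟨y, ⟨-, hy, -⟩, rfl⟩ <;> simp only [id] <;> omega
    refine ⟨fun x hx => ?_, by omega⟩
    simp only [seedShift, Finset.mem_union, Finset.mem_filter, Finset.mem_Icc,
      Finset.mem_image] at hx
    rcases hx with ⟨⟨hx, -⟩, -⟩ | ⟨y, -, rfl⟩ <;> omega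

theorem seedInvariant_of_seedRead (hs : 1 ≤ s) (w : List A) {X : Finset ℕ} {t : ℕ}
    (h : seedRead one π s (some (∅, 0)) w = some (X, t)) : SeedInvariant s X t := by
  induction w using List.reverseRecOn generalizing X t with
  | nil =>
    cases h
    exact ⟨by simp, by simp; omega⟩
  | append_singleton w a ih =>
    rw [seedRead_concat] at h
    match hq : seedRead one π s (some (∅, 0)) w, h with
    | some (X₁, t₁), h => exact seedInvariant_of_seedStep one π s (ih hq) h

theorem seedShift_filter (X : Finset ℕ) (t L : ℕ) (a : A) :
    seedShift π s (X.filter fun x => x + t ≤ L) (min t L) a =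
      (seedShift π s X t a).filter (· ≤ L + 1) := by
  ext x
  simp only [seedShift, Finset.mem_union, Finset.mem_filter, Finset.mem_Icc, Finset.mem_image]
  grind

def truncState (L : ℕ) (X : Finset ℕ) (t : ℕ) : Finset ℕ × ℕ :=
  (X.filter fun x => x + t ≤ L, min t L)

theorem seedStep_truncState {X₁ X : Finset ℕ} {t₁ t : ℕ} {a : A} (L : ℕ)
    (h : seedStep one π s (some (X₁, t₁)) a = some (X, t)) (hX : X.sup id + t < s) :
    seedStep one π s (some (truncState L X₁ t₁)) a = some (truncState (L + 1) X t) := by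
  have hsup_filter (Y : Finset ℕ) (p : ℕ → Prop) [DecidablePred p] :
      (Y.filter p).sup id ≤ Y.sup id :=
    Finset.sup_mono (Finset.filter_subset _ _)
  rcases seedStep_eq_some one π s h with ⟨rfl, rfl, rfl, -⟩ | ⟨ha, rfl, rfl, -⟩
  · have := hsup_filter X fun x => x + t₁ ≤ L
    rw [truncState, seedStep_some, if_pos rfl, if_neg (by omega), truncState]
    congr 3
    · ext x
      omega
    · omega
  · have := hsup_filter (seedShift π s X₁ t₁ a) (· ≤ L + 1)
    rw [truncState, seedStep_some, if_neg ha, seedShift_filter, if_neg (by omega), truncState]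
    simp

theorem seedRead_append_eq_truncState (hs : 1 ≤ s) (u w : List A) {X : Finset ℕ} {t : ℕ}
    (h : seedRead one π s (some (∅, 0)) (u ++ w) = some (X, t)) :
    seedRead one π s (some (∅, 0)) w = some (truncState w.length X t) := by
  induction w using List.reverseRecOn generalizing X t with
  | nil =>
    obtain ⟨hpos, -⟩ := seedInvariant_of_seedRead one π s hs _ h
    simp only [seedRead_nil, truncState, List.length_nil, Option.some.injEq, Prod.ext_iff]
    refine ⟨?_, by simp⟩
    ext x
    simp only [Finset.notMem_empty, Finset.mem_filter, false_iff, not_and]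
    intro hx
    have := hpos x hx
    omega
  | append_singleton w a ih =>
    have hX := seedInvariant_of_seedRead one π s hs _ h
    rw [← List.append_assoc, seedRead_concat] at h
    rw [seedRead_concat, List.length_append, List.length_singleton]
    match hq : seedRead one π s (some (∅, 0)) (u ++ w), h with
    | some (X₁, t₁), h => rw [ih hq]; exact seedStep_truncState one π s _ h hX.2

theorem sup_add_le_length_of_seedRead (hs : 1 ≤ s) (w : List A) {X : Finset ℕ} {t : ℕ}
    (h : seedRead one π s (some (∅, 0)) w = some (X, t)) : X.sup id + t ≤ w.length := by
  have htrunc := seedRead_append_eq_truncState one π s hs [] w h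
  rw [h, Option.some.injEq, truncState, Prod.mk.injEq] at htrunc
  obtain ⟨hX, ht⟩ := htrunc
  have hsup : X.sup id ≤ w.length - t := Finset.sup_le fun x hx => by
    have := (Finset.mem_filter.1 (hX ▸ hx)).2
    simp only [id]
    omega
  omega

theorem truncState_sup_erase_sup {X : Finset ℕ} (h : 0 < X.sup id) (t : ℕ) :
    truncState ((X.erase (X.sup id)).sup id + t) X t = (X.erase (X.sup id), t) := by
  have hlt := Finset.sup_erase_sup_lt h
  rw [truncState, min_eq_left (by omega)]
  congr 1
  ext x
  simp only [Finset.mem_filter, Finset.mem_erase, add_le_add_iff_right]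
  constructor
  · rintro ⟨hx, hle⟩
    exact ⟨by omega, hx⟩
  · rintro ⟨hne, hx⟩
    exact ⟨hx, Finset.le_sup (f := id) (Finset.mem_erase.2 ⟨hne, hx⟩)⟩

end SubsetSeedAutomaton

theorem stmt_13_general [DecidableEq A] (one : A) (π : ℕ → Finset A) (s : ℕ)
    (hs : 1 ≤ s)
    (X : Finset ℕ) (t : ℕ)
    (hne : X.Nonempty)
    (hreach : ∃ W : List A, seedRead one π s (some (∅, 0)) W = some (X, t)) :
    (∃ W : List A, W.length = (X.erase (X.sup id)).sup id + t ∧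
        seedRead one π s (some (∅, 0)) W = some (X.erase (X.sup id), t)) ∧
      ((X.erase (X.sup id)).sup id + t < X.sup id + t ∧
        ∀ W : List A, seedRead one π s (some (∅, 0)) W = some (X, t) →
          X.sup id + t ≤ W.length) := by
  obtain ⟨w, hw⟩ := hreach
  obtain ⟨hpos, -⟩ := seedInvariant_of_seedRead one π s hs w hw
  obtain ⟨b, hb, hbsup⟩ := Finset.exists_mem_eq_sup X hne id
  have hsup_pos : 0 < X.sup id := hbsup ▸ hpos b hb
  have hlt := Finset.sup_erase_sup_lt hsup_pos
  have hlen := sup_add_le_length_of_seedRead one π s hs w hw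
  set n := (X.erase (X.sup id)).sup id + t
  have hsuffix := seedRead_append_eq_truncState one π s hs (w.take (w.length - n))
    (w.drop (w.length - n)) (by rwa [List.take_append_drop])
  rw [List.length_drop, Nat.sub_sub_self (by omega), truncState_sup_erase_sup hsup_pos] at hsuffix
  exact ⟨⟨w.drop (w.length - n), by simp only [List.length_drop]; omega, hsuffix⟩, by omega,
    fun w' hw' => sup_add_le_length_of_seedRead one π s hs w' hw'⟩

/-- If a non-final state `⟨X,t⟩` of `S_π` with `X ≠ ∅` is reachable from the initial
state, then `⟨X',t⟩` with `X' = X \ {max X}` is also reachable; moreover `⟨X',t⟩` is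
reached by a word of length `max X' + t`, and every word reaching `⟨X,t⟩` has length at
least `max X + t` (so strictly greater than `max X' + t`). -/
theorem stmt_13 [DecidableEq A] (one : A) (π : ℕ → Finset A) (s : ℕ)
    (hs : 1 ≤ s) (hone : ∀ i, 1 ≤ i → i ≤ s → one ∈ π i)
    (X : Finset ℕ) (t : ℕ)
    (hsub : X ⊆ (Finset.Icc 1 s).filter fun i => π i ≠ ({one} : Finset A))
    (hbound : X.sup id + t ≤ s - 1) (hne : X.Nonempty)
    (hreach : ∃ W : List A, seedRead one π s (some (∅, 0)) W = some (X, t)) :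
    (∃ W : List A, W.length = (X.erase (X.sup id)).sup id + t ∧
        seedRead one π s (some (∅, 0)) W = some (X.erase (X.sup id), t)) ∧
      ((X.erase (X.sup id)).sup id + t < X.sup id + t ∧
        ∀ W : List A, seedRead one π s (some (∅, 0)) W = some (X, t) →
          X.sup id + t ≤ W.length) :=
  stmt_13_general one π s hs X t hne hreach
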